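/- Recursive Haar factorization: for N = 2^L with L ≥ 2 (so N ≥ 4), the N×N Haar matrix satisfies W_N = diag(W_{N/2}, I_{N/2}) · P̃_N · (I_{N/2} ⊗ W_2) · P̃_N^T, where diag(W_{N/2}, I_{N/2}) is the block diagonal matrix with blocks W_{N/2} and I_{N/2}, P̃_N is the odd-even permutation matrix, and ⊗ denotes the Kronecker product. -/
import Mathlib


open Matrix Complex

/-- Cast a square matrix along an equality of sizes. -/
noncomputable def castM {m n : ℕ} (h : m = n) (A : Matrix (Fin m) (Fin m) ℂ) :
    Matrix (Fin n) (Fin n) ℂ :=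
  Matrix.reindex (finCongr h) (finCongr h) A

/-- Block diagonal matrix `diag(A, B)`. -/
noncomputable def blockDiag2 {m n : ℕ} (A : Matrix (Fin m) (Fin m) ℂ)
    (B : Matrix (Fin n) (Fin n) ℂ) : Matrix (Fin (m + n)) (Fin (m + n)) ℂ :=
  Matrix.reindex finSumFinEquiv finSumFinEquiv (Matrix.fromBlocks A 0 0 B)

/-- 2×2 block matrix `[[A, B],[C, D]]` with m×m blocks, as an `(m+m)×(m+m)` matrix. -/
noncomputable def fromBlocks2 {m : ℕ} (A B C D : Matrix (Fin m) (Fin m) ℂ) :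
    Matrix (Fin (m + m)) (Fin (m + m)) ℂ :=
  Matrix.reindex finSumFinEquiv finSumFinEquiv (Matrix.fromBlocks A B C D)

/-- Kronecker product of two square matrices, with row-major flattened indices. -/
noncomputable def kronF {m n : ℕ} (A : Matrix (Fin m) (Fin m) ℂ)
    (B : Matrix (Fin n) (Fin n) ℂ) : Matrix (Fin (m * n)) (Fin (m * n)) ℂ :=
  Matrix.reindex finProdFinEquiv finProdFinEquiv (Matrix.kroneckerMap (· * ·) A B)

/-- The odd-even permutation matrix `P̃_N` (0-based indices):
`[P̃_N]_{i,k} = 1` iff (`2i < N` and `k = 2i`) or (`2i ≥ N` and `k = 2i+1−N`). -/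
noncomputable def oddEvenPerm (N : ℕ) : Matrix (Fin N) (Fin N) ℂ :=
  Matrix.of fun i k =>
    if (2 * i.val < N ∧ k.val = 2 * i.val) ∨ (N ≤ 2 * i.val ∧ k.val = 2 * i.val + 1 - N)
    then 1 else 0

/-- The base 2×2 Haar matrix `W_2 = (1/√2)·[[1,1],[1,−1]]`. -/
noncomputable def W2 : Matrix (Fin 2) (Fin 2) ℂ :=
  (1 / (Real.sqrt 2 : ℂ)) • !![1, 1; 1, -1]

/-- The Haar matrices: `W_1 = 1` and
`W_{2^{L+1}} = (1/√2)·[[W_{2^L}, W_{2^L}],[I, −I]]`. -/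
noncomputable def haarMat : (L : ℕ) → Matrix (Fin (2 ^ L)) (Fin (2 ^ L)) ℂ
  | 0 => 1
  | L + 1 =>
      castM (by ring)
        ((1 / (Real.sqrt 2 : ℂ)) • fromBlocks2 (haarMat L) (haarMat L) 1 (-1))

def e3 (M : ℕ) : Fin M ⊕ Fin M ≃ Fin M × Fin 2 where
  toFun := Sum.elim (fun a => (a, 0)) (fun a => (a, 1))
  invFun p := if p.2 = 0 then .inl p.1 else .inr p.1
  left_inv := by rintro (a | a) <;> simp
  right_inv := by rintro ⟨a, b⟩; fin_cases b <;> simp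

@[simp] lemma finSumFinEquiv_symm_addNat {M : ℕ} (a : Fin M) :
    finSumFinEquiv.symm (a.addNat M) = Sum.inr a := by
  rw [Equiv.symm_apply_eq]
  ext
  simp [Nat.add_comm]

def oeσ (M N : ℕ) (h1 : M + M = N) (h2 : M * 2 = N) : Fin N ≃ Fin N :=
  (finCongr h1).symm.trans
    (((finSumFinEquiv.symm.trans (e3 M)).trans finProdFinEquiv).trans (finCongr h2))

lemma oeσ_val (M N : ℕ) (h1 : M + M = N) (h2 : M * 2 = N) (i : Fin N) :
    (oeσ M N h1 h2 i).val = if i.val < M then 2 * i.val else 2 * (i.val - M) + 1 := by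
  obtain ⟨i, rfl⟩ := (finCongr h1).surjective i
  obtain ⟨s, rfl⟩ := finSumFinEquiv.surjective i
  rcases s with a | a <;>
    simp [oeσ, e3] <;> omega

lemma oddEvenPerm_eq (M N : ℕ) (h1 : M + M = N) (h2 : M * 2 = N) :
    oddEvenPerm N = ((oeσ M N h1 h2).toPEquiv.toMatrix : Matrix (Fin N) (Fin N) ℂ) := by
  ext i k
  rw [PEquiv.toMatrix_apply]
  simp only [Equiv.toPEquiv_apply, Option.mem_def, Option.some.injEq, oddEvenPerm,
    Matrix.of_apply]
  have hval := oeσ_val M N h1 h2 i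
  have hk : k.val < N := k.isLt
  have : ((2 * i.val < N ∧ k.val = 2 * i.val) ∨
      (N ≤ 2 * i.val ∧ k.val = 2 * i.val + 1 - N)) ↔ oeσ M N h1 h2 i = k := by
    rw [Fin.ext_iff, hval]
    have hi : i.val < N := i.isLt
    by_cases hc : i.val < M <;> simp [hc] <;> omega
  simp only [this]

lemma castM_mul {m n : ℕ} (h : m = n) (A B : Matrix (Fin m) (Fin m) ℂ) :
    castM h A * castM h B = castM h (A * B) := by
  simp only [castM, Matrix.reindex_apply]
  exact Matrix.submatrix_mul_equiv A B _ _ _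

lemma fromBlocks2_mul {m : ℕ} (A B C D A' B' C' D' : Matrix (Fin m) (Fin m) ℂ) :
    fromBlocks2 A B C D * fromBlocks2 A' B' C' D' =
      fromBlocks2 (A * A' + B * C') (A * B' + B * D') (C * A' + D * C') (C * B' + D * D') := by
  simp only [fromBlocks2, Matrix.reindex_apply]
  rw [Matrix.submatrix_mul_equiv, Matrix.fromBlocks_multiply]

lemma keyC (M N : ℕ) (h1 : M + M = N) (h2 : M * 2 = N) :
    (castM h2 (kronF (1 : Matrix (Fin M) (Fin M) ℂ) W2)).submatrix
        (oeσ M N h1 h2) (oeσ M N h1 h2)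
      = castM h1 ((1 / (Real.sqrt 2 : ℂ)) • fromBlocks2 1 1 1 (-1)) := by
  ext i j
  obtain ⟨i, rfl⟩ := (finCongr h1).surjective i
  obtain ⟨j, rfl⟩ := (finCongr h1).surjective j
  obtain ⟨si, rfl⟩ := finSumFinEquiv.surjective i
  obtain ⟨sj, rfl⟩ := finSumFinEquiv.surjective j
  rcases si with a | a <;> rcases sj with b | b <;>
    simp [castM, kronF, fromBlocks2, oeσ, e3, W2, Matrix.one_apply, mul_ite, mul_one,
      mul_zero, mul_neg]

/-- **Recursive Haar factorization**: for `N = 2^(L+2)` (i.e. `N = 2^L` with `L ≥ 2`),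
`W_N = diag(W_{N/2}, I_{N/2}) · P̃_N · (I_{N/2} ⊗ W_2) · P̃_Nᵀ`. -/
theorem haar_recursive_factorization (L : ℕ) :
    haarMat (L + 2) =
      castM (show 2 ^ (L + 1) + 2 ^ (L + 1) = 2 ^ (L + 2) by ring)
          (blockDiag2 (haarMat (L + 1)) (1 : Matrix (Fin (2 ^ (L + 1))) (Fin (2 ^ (L + 1))) ℂ))
        * oddEvenPerm (2 ^ (L + 2))
        * castM (show 2 ^ (L + 1) * 2 = 2 ^ (L + 2) by ring)
            (kronF (1 : Matrix (Fin (2 ^ (L + 1))) (Fin (2 ^ (L + 1))) ℂ) W2)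
        * (oddEvenPerm (2 ^ (L + 2)))ᵀ := by
  have h1 : 2 ^ (L + 1) + 2 ^ (L + 1) = 2 ^ (L + 2) := by ring
  have h2 : 2 ^ (L + 1) * 2 = 2 ^ (L + 2) := by ring
  set M := 2 ^ (L + 1)
  set N := 2 ^ (L + 2)
  rw [oddEvenPerm_eq M N h1 h2]
  set σ := oeσ M N h1 h2
  have hT : (σ.toPEquiv.toMatrix : Matrix (Fin N) (Fin N) ℂ)ᵀ = σ.symm.toPEquiv.toMatrix := by
    rw [← PEquiv.toMatrix_symm, ← Equiv.toPEquiv_symm]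
  have hmid : σ.toPEquiv.toMatrix * castM h2 (kronF (1 : Matrix (Fin M) (Fin M) ℂ) W2)
      * (σ.toPEquiv.toMatrix : Matrix (Fin N) (Fin N) ℂ)ᵀ
      = castM h1 ((1 / (Real.sqrt 2 : ℂ)) • fromBlocks2 1 1 1 (-1)) := by
    rw [hT, PEquiv.toMatrix_toPEquiv_mul, PEquiv.mul_toMatrix_toPEquiv,
      Matrix.submatrix_submatrix]
    simp only [Equiv.symm_symm, Function.comp_id, Function.id_comp]
    exact keyC M N h1 h2
  rw [mul_assoc (castM h1 (blockDiag2 (haarMat (L + 1)) (1 : Matrix (Fin M) (Fin M) ℂ))),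
    mul_assoc (castM h1 (blockDiag2 (haarMat (L + 1)) (1 : Matrix (Fin M) (Fin M) ℂ))),
    hmid]
  rw [castM_mul]
  rw [show (blockDiag2 (haarMat (L + 1)) (1 : Matrix (Fin M) (Fin M) ℂ)) =
      fromBlocks2 (haarMat (L + 1)) 0 0 1 from rfl]
  rw [Matrix.mul_smul, fromBlocks2_mul]
  simp only [Matrix.mul_one, Matrix.one_mul, Matrix.mul_zero, Matrix.zero_mul,
    Matrix.mul_neg, neg_zero, add_zero, zero_add, mul_one, neg_one_mul]
  show haarMat (L + 2) = castM h1 ((1 / (Real.sqrt 2 : ℂ)) •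
    fromBlocks2 (haarMat (L + 1)) (haarMat (L + 1)) 1 (-1))
  rfl
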